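/- Let S be a bounded set of diameter d > 0 in a metric space. If a(S) > 2, then a_k(S) > 2k for every positive integer k. -/

import Mathlib

/-!
Take a `k`-fold cover of `S` by at most `2k` sets of smaller diameter and a member `F j` of it.
Any two points `x, y ∈ S \ F j` are each covered by at least `k` of the at most `2k - 1` other
sets, so some set contains both; hence `S \ F j` has diameter at most the largest diameter of the
cover, and `{F j, S \ F j}` is a cover of `S` by two sets of smaller diameter.
-/

open Set

/-- The `k`-fold Borsuk number of a set `S` in a metric space: the smallest
cardinality of a finite family of subsets of `S`, each of diameter strictly
less than `diam S`, covering every point of `S` at least `k` times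
(`⊤` if no such finite family exists). -/
noncomputable def borsukNum {X : Type*} [MetricSpace X] (S : Set X) (k : ℕ) : ℕ∞ :=
  sInf {n : ℕ∞ | ∃ m : ℕ, n = (m : ℕ∞) ∧ ∃ F : Fin m → Set X,
    (∀ i, F i ⊆ S ∧ Metric.diam (F i) < Metric.diam S) ∧
    ∀ x ∈ S, k ≤ {i : Fin m | x ∈ F i}.ncard}

theorem Set.inter_nonempty_of_card_le_ncard_add_ncard {ι : Type*} [Finite ι] {A B : Set ι}
    (hAB : A ∪ B ≠ univ) (hcard : Nat.card ι ≤ A.ncard + B.ncard) : (A ∩ B).Nonempty := by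
  have hunion : (A ∪ B).ncard < Nat.card ι := ncard_lt_card hAB
  have hsum := ncard_union_add_ncard_inter A B
  exact nonempty_of_ncard_ne_zero (by omega)

section BorsukCover

variable {X : Type*} [MetricSpace X] {S : Set X} {k : ℕ}

def IsBorsukCover {ι : Type*} (S : Set X) (k : ℕ) (F : ι → Set X) : Prop :=
  (∀ i, F i ⊆ S ∧ Metric.diam (F i) < Metric.diam S) ∧ ∀ x ∈ S, k ≤ {i | x ∈ F i}.ncard

theorem borsukNum_eq_sInf :
    borsukNum S k = sInf {n : ℕ∞ | ∃ m : ℕ, n = m ∧ ∃ F : Fin m → Set X, IsBorsukCover S k F} :=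
  rfl

theorem borsukNum_le_of_isBorsukCover {m : ℕ} {F : Fin m → Set X}
    (hF : IsBorsukCover S k F) : borsukNum S k ≤ m :=
  sInf_le ⟨m, rfl, F, hF⟩

theorem exists_isBorsukCover_of_borsukNum_le {n : ℕ} (h : borsukNum S k ≤ n) :
    ∃ m ≤ n, ∃ F : Fin m → Set X, IsBorsukCover S k F := by
  rw [borsukNum_eq_sInf] at h
  have hne : {n : ℕ∞ | ∃ m : ℕ, n = m ∧ ∃ F : Fin m → Set X, IsBorsukCover S k F}.Nonempty := by
    by_contra hempty
    rw [not_nonempty_iff_eq_empty.mp hempty, sInf_empty] at h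
    simp at h
  obtain ⟨m, hm, F, hF⟩ := csInf_mem hne
  exact ⟨m, by rw [hm] at h; exact_mod_cast h, F, hF⟩

theorem IsBorsukCover.exists_mem {ι : Type*} [Finite ι] {F : ι → Set X} (hF : IsBorsukCover S k F)
    (hk : 0 < k) {x : X} (hx : x ∈ S) : ∃ i, x ∈ F i :=
  nonempty_of_ncard_ne_zero (s := {i | x ∈ F i}) (by have := hF.2 x hx; omega)

theorem IsBorsukCover.diam_diff_lt {ι : Type*} [Finite ι] {F : ι → Set X} (hF : IsBorsukCover S k F)
    (hb : Bornology.IsBounded S) (hcard : Nat.card ι ≤ 2 * k) (j : ι) :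
    Metric.diam (S \ F j) < Metric.diam S := by
  have : Nonempty ι := ⟨j⟩
  obtain ⟨i₀, hi₀⟩ := Finite.exists_max fun i => Metric.diam (F i)
  refine lt_of_le_of_lt ?_ (hF.1 i₀).2
  refine Metric.diam_le_of_forall_dist_le Metric.diam_nonneg fun x ⟨hxS, hxj⟩ y ⟨hyS, hyj⟩ => ?_
  have hj : {i | x ∈ F i} ∪ {i | y ∈ F i} ≠ univ := fun h => by
    rcases h.symm ▸ mem_univ j with hj | hj
    exacts [hxj hj, hyj hj]
  obtain ⟨i, hxi, hyi⟩ := inter_nonempty_of_card_le_ncard_add_ncard hj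
    (by have := hF.2 x hxS; have := hF.2 y hyS; omega)
  exact (Metric.dist_le_diam_of_mem (hb.subset (hF.1 i).1) hxi hyi).trans (hi₀ i)

theorem borsukNum_one_le_two {T : Set X} (hT : T ⊆ S) (hTd : Metric.diam T < Metric.diam S)
    (hdiff : Metric.diam (S \ T) < Metric.diam S) : borsukNum S 1 ≤ 2 := by
  refine borsukNum_le_of_isBorsukCover (F := ![T, S \ T]) ⟨?_, fun x hx => ?_⟩
  · intro i
    fin_cases i
    exacts [⟨hT, hTd⟩, ⟨sdiff_subset, hdiff⟩]
  · refine (ncard_pos).mpr ?_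
    by_cases hxT : x ∈ T
    exacts [⟨0, hxT⟩, ⟨1, hx, hxT⟩]

end BorsukCover

theorem borsuk_gt_two_k_of_gt_two {X : Type*} [MetricSpace X] (S : Set X)
    (hb : Bornology.IsBounded S) (hd : 0 < Metric.diam S)
    (ha : 2 < borsukNum S 1)
    (k : ℕ) (hk : 0 < k) :
    (2 * k : ℕ∞) < borsukNum S k := by
  by_contra! hle
  obtain ⟨m, hm, F, hF⟩ := exists_isBorsukCover_of_borsukNum_le (n := 2 * k) (by exact_mod_cast hle)
  obtain ⟨x, hx⟩ : S.Nonempty := nonempty_iff_ne_empty.mpr fun h => by simp [h] at hd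
  obtain ⟨j, -⟩ := hF.exists_mem hk hx
  have h2 := borsukNum_one_le_two (hF.1 j).1 (hF.1 j).2 (hF.diam_diff_lt hb (by simpa using hm) j)
  exact (ha.trans_le h2).false
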